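/- Let W be an m × n real matrix. For every factorization W = U·V, where U is an m × r matrix and V is an r × n matrix for some r, the trace norm satisfies ‖W‖_T ≤ (1/2)(‖U‖_F² + ‖V‖_F²). -/

import Mathlib

open Matrix BigOperators

/-- The Frobenius norm of a real matrix. -/
noncomputable def frobeniusNorm {m n : ℕ} (A : Matrix (Fin m) (Fin n) ℝ) : ℝ :=
  Real.sqrt (∑ i, ∑ j, (A i j) ^ 2)

/-- The full list of `n` singular values of an `m × n` real matrix `W`, namely the
nonnegative square roots of the eigenvalues of `Wᵀ * W`. (At most `min m n` of these
are nonzero.) -/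
noncomputable def singularValuesFull {m n : ℕ} (W : Matrix (Fin m) (Fin n) ℝ) :
    Fin n → ℝ :=
  fun i => Real.sqrt ((Matrix.isHermitian_conjTranspose_mul_self W).eigenvalues i)

/-- The trace norm (nuclear norm) of a real matrix: the sum of its singular values. -/
noncomputable def traceNorm {m n : ℕ} (W : Matrix (Fin m) (Fin n) ℝ) : ℝ :=
  ∑ i, singularValuesFull W i

/-- `σ : Fin (min m n) → ℝ` is "the vector of singular values" of `W` when its entries
are nonnegative and, after padding with `n - min m n` zeros, it agrees (as a multiset)
with the nonnegative square roots of the eigenvalues of `Wᵀ * W`. -/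
def IsSingularValueVector {m n : ℕ} (W : Matrix (Fin m) (Fin n) ℝ)
    (σ : Fin (min m n) → ℝ) : Prop :=
  (∀ i, 0 ≤ σ i) ∧
    Multiset.map σ Finset.univ.val + Multiset.replicate (n - min m n) 0
      = Multiset.map (singularValuesFull W) Finset.univ.val

/-!
Let `Q` be an orthogonal matrix diagonalizing `WᵀW`, so that `(WQ)ᵀ(WQ) = diag(σᵢ²)`. Then
`Y := WQ · diag(σᵢ⁻¹)` satisfies `YYᵀY = Y` and `tr(Yᵀ W Q) = Σ σᵢ = ‖W‖_T`. For `W = UV` this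
trace is the Frobenius inner product `⟨UᵀY, VQ⟩ ≤ ½ (‖UᵀY‖_F² + ‖VQ‖_F²)`, and
`‖UᵀY‖_F ≤ ‖U‖_F` because `YYᵀ` is an orthogonal projection, while `‖VQ‖_F = ‖V‖_F`.
-/

section

variable {k l m n : Type*} [Fintype k] [Fintype l] [Fintype m] [Fintype n]

theorem trace_transpose_mul_self_eq_sum_sq (A : Matrix m n ℝ) :
    trace (Aᵀ * A) = ∑ i, ∑ j, A i j ^ 2 := by
  simp only [trace, diag, mul_apply, transpose_apply, sq]
  exact Finset.sum_comm

theorem trace_transpose_mul_self_nonneg (A : Matrix m n ℝ) : 0 ≤ trace (Aᵀ * A) := by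
  rw [trace_transpose_mul_self_eq_sum_sq]
  positivity

theorem trace_transpose_mul_le (A B : Matrix m n ℝ) :
    trace (Aᵀ * B) ≤ (1 / 2) * (trace (Aᵀ * A) + trace (Bᵀ * B)) := by
  have hsq := trace_transpose_mul_self_nonneg (A - B)
  have hBA : trace (Bᵀ * A) = trace (Aᵀ * B) := by
    rw [← trace_transpose, transpose_mul, transpose_transpose]
  simp only [transpose_sub, Matrix.sub_mul, Matrix.mul_sub, trace_sub] at hsq
  linarith

theorem trace_transpose_mul_mul_le [DecidableEq m] {P : Matrix m m ℝ} (hPT : Pᵀ = P)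
    (hP : IsIdempotentElem P) (A : Matrix m n ℝ) :
    trace (Aᵀ * P * A) ≤ trace (Aᵀ * A) := by
  have hsq := trace_transpose_mul_self_nonneg ((1 - P) * A)
  have hexpand : ((1 - P) * A)ᵀ * ((1 - P) * A) = Aᵀ * A - Aᵀ * P * A := by
    rw [transpose_mul, transpose_sub, transpose_one, hPT, Matrix.mul_assoc,
      ← Matrix.mul_assoc (1 - P), hP.one_sub.eq, Matrix.sub_mul, Matrix.mul_sub, Matrix.one_mul,
      Matrix.mul_assoc]
  rw [hexpand, trace_sub] at hsq
  linarith

theorem trace_transpose_mul_self_mul_of_mul_transpose_eq_one [DecidableEq n]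
    {Q : Matrix n k ℝ} (hQ : Q * Qᵀ = 1) (V : Matrix m n ℝ) :
    trace ((V * Q)ᵀ * (V * Q)) = trace (Vᵀ * V) := by
  rw [transpose_mul, Matrix.mul_assoc, trace_mul_comm, Matrix.mul_assoc, Matrix.mul_assoc, hQ,
    Matrix.mul_one]

theorem trace_transpose_mul_mul_le_half [DecidableEq m] [DecidableEq n] {Y : Matrix m k ℝ}
    (hY : Y * Yᵀ * Y = Y) {Q : Matrix n k ℝ} (hQ : Q * Qᵀ = 1) (U : Matrix m l ℝ)
    (V : Matrix l n ℝ) :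
    trace (Yᵀ * (U * V * Q)) ≤ (1 / 2) * (trace (Uᵀ * U) + trace (Vᵀ * V)) := by
  have hP : IsIdempotentElem (Y * Yᵀ) := by
    rw [IsIdempotentElem, ← Matrix.mul_assoc, hY]
  have hU : trace ((Uᵀ * Y)ᵀ * (Uᵀ * Y)) ≤ trace (Uᵀ * U) := by
    rw [transpose_mul, transpose_transpose, trace_mul_comm]
    simp only [← Matrix.mul_assoc]
    rw [Matrix.mul_assoc Uᵀ Y]
    exact trace_transpose_mul_mul_le (by simp) hP U
  calc trace (Yᵀ * (U * V * Q)) = trace ((Uᵀ * Y)ᵀ * (V * Q)) := by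
        simp only [transpose_mul, transpose_transpose, Matrix.mul_assoc]
    _ ≤ (1 / 2) * (trace ((Uᵀ * Y)ᵀ * (Uᵀ * Y)) + trace ((V * Q)ᵀ * (V * Q))) :=
        trace_transpose_mul_le _ _
    _ ≤ (1 / 2) * (trace (Uᵀ * U) + trace (Vᵀ * V)) := by
        rw [trace_transpose_mul_self_mul_of_mul_transpose_eq_one hQ]
        linarith

theorem exists_trace_transpose_mul_eq_sum_sqrt [DecidableEq n] {X : Matrix m n ℝ} {d : n → ℝ}
    (hX : Xᵀ * X = diagonal d) :
    ∃ Y : Matrix m n ℝ, Y * Yᵀ * Y = Y ∧ trace (Yᵀ * X) = ∑ i, √(d i) := by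
  -- Since `0⁻¹ = 0`, the columns of `Y` with `d i = 0` vanish, so no case split is needed.
  have hYX : (X * diagonal (fun i => (√(d i))⁻¹))ᵀ * X = diagonal (fun i => √(d i)) := by
    rw [transpose_mul, diagonal_transpose, Matrix.mul_assoc, hX, diagonal_mul_diagonal]
    congr 1
    funext i
    rw [inv_mul_eq_div, Real.div_sqrt]
  refine ⟨X * diagonal (fun i => (√(d i))⁻¹), ?_, by rw [hYX, trace_diagonal]⟩
  rw [Matrix.mul_assoc, ← Matrix.mul_assoc _ X, hYX, Matrix.mul_assoc, diagonal_mul_diagonal,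
    diagonal_mul_diagonal]
  congr 2
  funext i
  rw [← mul_assoc]
  simpa only [inv_inv] using mul_inv_mul_cancel (√(d i))⁻¹

theorem Matrix.IsHermitian.eigenvectorUnitary_mul_transpose [DecidableEq n] {A : Matrix n n ℝ}
    (hA : A.IsHermitian) :
    (hA.eigenvectorUnitary : Matrix n n ℝ) * (hA.eigenvectorUnitary : Matrix n n ℝ)ᵀ = 1 := by
  rw [← conjTranspose_eq_transpose_of_trivial, ← star_eq_conjTranspose]
  exact mem_unitaryGroup_iff.mp hA.eigenvectorUnitary.2

theorem Matrix.IsHermitian.transpose_eigenvectorUnitary_mul_mul [DecidableEq n]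
    {A : Matrix n n ℝ} (hA : A.IsHermitian) :
    (hA.eigenvectorUnitary : Matrix n n ℝ)ᵀ * A * hA.eigenvectorUnitary
      = diagonal hA.eigenvalues := by
  have h := hA.conjStarAlgAut_star_eigenvectorUnitary
  rw [Unitary.conjStarAlgAut_apply, Unitary.coe_star, star_star, star_eq_conjTranspose,
    conjTranspose_eq_transpose_of_trivial] at h
  exact h

end

theorem frobeniusNorm_sq {m n : ℕ} (A : Matrix (Fin m) (Fin n) ℝ) :
    frobeniusNorm A ^ 2 = trace (Aᵀ * A) := by
  rw [frobeniusNorm, Real.sq_sqrt (by positivity), trace_transpose_mul_self_eq_sum_sq]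

theorem trace_norm_le_half_frobenius_sq {m n r : ℕ} (W : Matrix (Fin m) (Fin n) ℝ)
    (U : Matrix (Fin m) (Fin r) ℝ) (V : Matrix (Fin r) (Fin n) ℝ) (hW : W = U * V) :
    traceNorm W ≤ (1 / 2) * (frobeniusNorm U ^ 2 + frobeniusNorm V ^ 2) := by
  have hA := isHermitian_conjTranspose_mul_self W
  set Q := (hA.eigenvectorUnitary : Matrix (Fin n) (Fin n) ℝ)
  have hdiag : (W * Q)ᵀ * (W * Q) = diagonal hA.eigenvalues := by
    rw [transpose_mul, Matrix.mul_assoc, ← Matrix.mul_assoc Wᵀ, ← Matrix.mul_assoc,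
      ← conjTranspose_eq_transpose_of_trivial]
    exact hA.transpose_eigenvectorUnitary_mul_mul
  obtain ⟨Y, hY, htrace⟩ := exists_trace_transpose_mul_eq_sum_sqrt hdiag
  rw [frobeniusNorm_sq, frobeniusNorm_sq]
  calc traceNorm W = trace (Yᵀ * (U * V * Q)) := by rw [← hW, htrace]; rfl
    _ ≤ _ := trace_transpose_mul_mul_le_half hY hA.eigenvectorUnitary_mul_transpose U V
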